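/- arXiv:2305.18425 — 2 statements merged into one kernel-verified Lean document; each statement's English description precedes it below -/
import Mathlib

section
/- Let $N \ge 1$, and for each $i \in \{1,\dots,N\}$ let $a_i < 0$, $b_i \in \mathbb{R}$, and $c_i > 0$. Let $\lambda > 0$ and $M \in \mathbb{R}$, and define $r_i^\ast = \frac{1}{a_i}\big( \log(-c_i/a_i) - b_i + \log \lambda \big)$, and suppose $\sum_{i=1}^N c_i r_i^\ast = M$. Then for every $r \in \mathbb{R}^N$ with $\sum_{i=1}^N c_i r_i = M$, one has $\sum_{i=1}^N \exp(a_i r_i + b_i) \ge \sum_{i=1}^N \exp(a_i r_i^\ast + b_i)$; that is, $r^\ast$ is a global minimizer of the total log-linear approximation error over the budget hyperplane. -/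
/-!
The budget constraint makes `∑ᵢ cᵢ (rᵢ - rᵢ*)` vanish, and at `r*` the derivative of every
summand `exp(aᵢ r + bᵢ)` is `-λ cᵢ`. Adding up the tangent-line lower bounds of the convex
summands at `r*` therefore gives `∑ᵢ exp(aᵢ rᵢ + bᵢ) ≥ ∑ᵢ exp(aᵢ rᵢ* + bᵢ)`.
-/

open Finset

/-- Sufficiency of the Lagrange condition: `lam` is the multiplier of the constraint
`∑ i ∈ s, c i * y i = const`. -/
theorem sum_le_sum_of_tangent_slope_eq_neg_mul {ι : Type*} (s : Finset ι) (g : ι → ℝ → ℝ)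
    (c x y : ι → ℝ) (lam : ℝ)
    (htangent : ∀ i ∈ s, g i (x i) - lam * c i * (y i - x i) ≤ g i (y i))
    (hbudget : ∑ i ∈ s, c i * y i = ∑ i ∈ s, c i * x i) :
    ∑ i ∈ s, g i (x i) ≤ ∑ i ∈ s, g i (y i) := by
  have hshift : ∑ i ∈ s, lam * c i * (y i - x i) = 0 := by
    simp only [mul_assoc, ← mul_sum, mul_sub, sum_sub_distrib, hbudget, sub_self]
  calc ∑ i ∈ s, g i (x i) = ∑ i ∈ s, (g i (x i) - lam * c i * (y i - x i)) := by
        rw [sum_sub_distrib, hshift, sub_zero]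
    _ ≤ ∑ i ∈ s, g i (y i) := sum_le_sum htangent

theorem Real.exp_mul_add_add_mul_sub_le (a b x y : ℝ) :
    Real.exp (a * x + b) + a * Real.exp (a * x + b) * (y - x) ≤ Real.exp (a * y + b) := by
  have hsplit : Real.exp (a * y + b) = Real.exp (a * x + b) * Real.exp (a * (y - x)) := by
    rw [← Real.exp_add]; ring_nf
  rw [hsplit]
  nlinarith [mul_le_mul_of_nonneg_left (Real.add_one_le_exp (a * (y - x)))
    (Real.exp_pos (a * x + b)).le]

theorem mul_exp_stationary_point_eq {a b c lam : ℝ} (ha : a ≠ 0) (hca : 0 < -c / a)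
    (hlam : 0 < lam) :
    a * Real.exp (a * ((1 / a) * (Real.log (-c / a) - b + Real.log lam)) + b) = -(lam * c) := by
  have hexponent : a * ((1 / a) * (Real.log (-c / a) - b + Real.log lam)) + b
      = Real.log (-c / a) + Real.log lam := by
    field_simp; ring
  rw [hexponent, Real.exp_add, Real.exp_log hca, Real.exp_log hlam]
  field_simp

theorem lagrangian_stationary_point_is_min_general (N : ℕ)
    (a b c : Fin N → ℝ) (ha : ∀ i, a i < 0) (hc : ∀ i, 0 < c i)
    (lam M : ℝ) (hlam : 0 < lam)
    (rstar : Fin N → ℝ)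
    (hrstar : ∀ i, rstar i = (1 / a i) * (Real.log (-(c i) / a i) - b i + Real.log lam))
    (hbudget : ∑ i, c i * rstar i = M) :
    ∀ r : Fin N → ℝ, (∑ i, c i * r i = M) →
      ∑ i, Real.exp (a i * rstar i + b i) ≤ ∑ i, Real.exp (a i * r i + b i) := by
  intro r hr
  refine sum_le_sum_of_tangent_slope_eq_neg_mul univ (fun i t => Real.exp (a i * t + b i))
    c rstar r lam (fun i _ => ?_) (hr.trans hbudget.symm)
  have hslope : a i * Real.exp (a i * rstar i + b i) = -(lam * c i) := by
    rw [hrstar i]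
    exact mul_exp_stationary_point_eq (ha i).ne
      (div_pos_of_neg_of_neg (neg_neg_of_pos (hc i)) (ha i)) hlam
  have htangent := Real.exp_mul_add_add_mul_sub_le (a i) (b i) (rstar i) (r i)
  rw [hslope] at htangent
  linarith

/-- The Lagrangian stationary point `r* i = (1/aᵢ)(log(-cᵢ/aᵢ) - bᵢ + log λ)` is a global
minimizer of `∑ᵢ exp(aᵢ rᵢ + bᵢ)` over the budget hyperplane `∑ᵢ cᵢ rᵢ = M`. -/
theorem lagrangian_stationary_point_is_min (N : ℕ) (hN : 1 ≤ N)
    (a b c : Fin N → ℝ) (ha : ∀ i, a i < 0) (hc : ∀ i, 0 < c i)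
    (lam M : ℝ) (hlam : 0 < lam)
    (rstar : Fin N → ℝ)
    (hrstar : ∀ i, rstar i = (1 / a i) * (Real.log (-(c i) / a i) - b i + Real.log lam))
    (hbudget : ∑ i, c i * rstar i = M) :
    ∀ r : Fin N → ℝ, (∑ i, c i * r i = M) →
      ∑ i, Real.exp (a i * rstar i + b i) ≤ ∑ i, Real.exp (a i * r i + b i) :=
  lagrangian_stationary_point_is_min_general N a b c ha hc lam M hlam rstar hrstar hbudget
end

section
/- Let $N \ge 1$, and for each $i \in \{1,\dots,N\}$ let $a_i < 0$, $b_i \in \mathbb{R}$, $c_i > 0$, and $s_i \ge 0$. Define, for $\lambda > 0$, $u_i(\lambda) = \operatorname{clamp}\big( \frac{1}{a_i}( \log(-c_i/a_i) - b_i + \log \lambda ),\, 0,\, s_i \big)$ and $C(\lambda) = \sum_{i=1}^N u_i(\lambda)\, c_i$. Then $C$ is continuous on $(0,\infty)$, $C(\lambda) \to \sum_{i=1}^N s_i c_i$ as $\lambda \to 0^+$, $C(\lambda) \to 0$ as $\lambda \to \infty$, and consequently for every $M$ with $0 \le M \le \sum_{i=1}^N s_i c_i$ there exists $\lambda > 0$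 with $C(\lambda) = M$. -/
open Finset Filter

/-- `clamp x lo hi = min (max x lo) hi`. -/
noncomputable def clamp (x lo hi : ℝ) : ℝ := min (max x lo) hi

/-- The total allocated budget `C(λ) = ∑ᵢ uᵢ(λ) cᵢ`, where
`uᵢ(λ) = clamp((1/aᵢ)(log(-cᵢ/aᵢ) - bᵢ + log λ), 0, sᵢ)`. -/
noncomputable def budgetC {N : ℕ} (a b c s : Fin N → ℝ) (lam : ℝ) : ℝ :=
  ∑ i, clamp ((1 / a i) * (Real.log (-(c i) / a i) - b i + Real.log lam)) 0 (s i) * c i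

lemma clamp_eq_hi {x hi : ℝ} (h : hi ≤ x) (h0 : 0 ≤ hi) : clamp x 0 hi = hi := by
  unfold clamp
  rw [max_eq_left (h0.trans h), min_eq_right h]

lemma clamp_eq_zero {x hi : ℝ} (h : x ≤ 0) (h0 : 0 ≤ hi) : clamp x 0 hi = 0 := by
  unfold clamp
  rw [max_eq_right h, min_eq_left h0]

/-- `C` is continuous on `(0, ∞)`, tends to `∑ᵢ sᵢ cᵢ` as `λ → 0⁺`, tends to `0` as
`λ → ∞`, and consequently attains every feasible budget `M ∈ [0, ∑ᵢ sᵢ cᵢ]`. -/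
theorem budget_function_attains_every_budget (N : ℕ) (hN : 1 ≤ N)
    (a b c s : Fin N → ℝ) (ha : ∀ i, a i < 0) (hc : ∀ i, 0 < c i) (hs : ∀ i, 0 ≤ s i) :
    ContinuousOn (budgetC a b c s) (Set.Ioi (0 : ℝ)) ∧
    Tendsto (budgetC a b c s) (nhdsWithin 0 (Set.Ioi (0 : ℝ))) (nhds (∑ i, s i * c i)) ∧
    Tendsto (budgetC a b c s) atTop (nhds 0) ∧
    ∀ M : ℝ, 0 ≤ M → M ≤ ∑ i, s i * c i →
      ∃ lam : ℝ, 0 < lam ∧ budgetC a b c s lam = M := by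
  set K : Fin N → ℝ := fun i => Real.log (-(c i) / a i) - b i with hK
  have hcont : ContinuousOn (budgetC a b c s) (Set.Ioi (0 : ℝ)) := by
    apply continuousOn_finset_sum
    intro i _
    have hinner : ContinuousOn (fun lam : ℝ =>
        (1 / a i) * (Real.log (-(c i) / a i) - b i + Real.log lam)) (Set.Ioi (0 : ℝ)) :=
      continuousOn_const.mul (continuousOn_const.add
        (Real.continuousOn_log.mono (fun x hx => ne_of_gt hx)))
    unfold clamp
    exact ((hinner.sup continuousOn_const).inf continuousOn_const).mul continuousOn_const
  -- eventual equality near 0⁺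
  have hev0 : ∀ᶠ lam in nhdsWithin 0 (Set.Ioi (0 : ℝ)),
      budgetC a b c s lam = ∑ i, s i * c i := by
    have h1 : ∀ᶠ lam in nhdsWithin 0 (Set.Ioi (0 : ℝ)), ∀ i,
        s i ≤ (1 / a i) * (Real.log (-(c i) / a i) - b i + Real.log lam) := by
      rw [Filter.eventually_all]
      intro i
      have hmem : Set.Ioo (0 : ℝ) (Real.exp (a i * s i - K i)) ∈
          nhdsWithin 0 (Set.Ioi (0 : ℝ)) :=
        Ioo_mem_nhdsGT_of_mem ⟨le_refl 0, Real.exp_pos _⟩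
      filter_upwards [hmem] with lam hlam
      have hlog : Real.log lam < a i * s i - K i := by
        have := Real.log_lt_log hlam.1 hlam.2
        rwa [Real.log_exp] at this
      have hy : K i + Real.log lam ≤ a i * s i := by linarith
      have hinv : (1 : ℝ) / a i < 0 := one_div_neg.2 (ha i)
      have h2 : (1 / a i) * (a i * s i) ≤ (1 / a i) * (K i + Real.log lam) :=
        mul_le_mul_of_nonpos_left hy hinv.le
      have h3 : (1 / a i) * (a i * s i) = s i := by
        field_simp
        exact mul_div_cancel_left₀ _ (ne_of_lt (ha i))
      simp only [hK] at h2 h3 ⊢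
      linarith
    filter_upwards [h1] with lam hlam
    unfold budgetC
    refine Finset.sum_congr rfl fun i _ => ?_
    rw [clamp_eq_hi (hlam i) (hs i)]
  -- eventual equality at ∞
  have hevtop : ∀ᶠ lam in atTop, budgetC a b c s lam = 0 := by
    have h1 : ∀ᶠ lam in atTop, ∀ i : Fin N,
        (1 / a i) * (Real.log (-(c i) / a i) - b i + Real.log lam) ≤ 0 := by
      rw [Filter.eventually_all]
      intro i
      filter_upwards [eventually_ge_atTop (Real.exp (-K i))] with lam hlam
      have hpos : 0 < lam := lt_of_lt_of_le (Real.exp_pos _) hlam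
      have hlog : -K i ≤ Real.log lam := by
        rw [← Real.log_exp (-K i)]
        exact Real.log_le_log (Real.exp_pos _) hlam
      have hy : 0 ≤ K i + Real.log lam := by linarith
      have hinv : (1 : ℝ) / a i < 0 := one_div_neg.2 (ha i)
      have := mul_nonpos_of_nonpos_of_nonneg hinv.le hy
      simpa [hK] using this
    filter_upwards [h1] with lam hlam
    unfold budgetC
    refine Finset.sum_eq_zero fun i _ => ?_
    rw [clamp_eq_zero (hlam i) (hs i), zero_mul]
  have htend0 : Tendsto (budgetC a b c s) (nhdsWithin 0 (Set.Ioi (0 : ℝ)))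
      (nhds (∑ i, s i * c i)) :=
    Tendsto.congr' (hev0.mono fun x hx => hx.symm) tendsto_const_nhds
  have htendtop : Tendsto (budgetC a b c s) atTop (nhds 0) :=
    Tendsto.congr' (hevtop.mono fun x hx => hx.symm) tendsto_const_nhds
  refine ⟨hcont, htend0, htendtop, ?_⟩
  intro M hM0 hMS
  obtain ⟨l1, hl1eq, hl1pos⟩ :=
    (hev0.and (eventually_mem_nhdsWithin (s := Set.Ioi (0:ℝ)))).exists
  obtain ⟨l2, hl2eq, hl2ge⟩ := (hevtop.and (eventually_ge_atTop l1)).exists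
  have hl1pos' : (0 : ℝ) < l1 := hl1pos
  have hsub : Set.Icc l1 l2 ⊆ Set.Ioi (0 : ℝ) := fun x hx => lt_of_lt_of_le hl1pos' hx.1
  have hIVT := intermediate_value_Icc' hl2ge (hcont.mono hsub)
  have hM : M ∈ Set.Icc (budgetC a b c s l2) (budgetC a b c s l1) := by
    rw [hl2eq, hl1eq]; exact ⟨hM0, hMS⟩
  obtain ⟨lam, hlam, hlameq⟩ := hIVT hM
  exact ⟨lam, lt_of_lt_of_le hl1pos' hlam.1, hlameq⟩
end
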